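/- arXiv:1810.02116 — 2 statements merged into one kernel-verified Lean document; each statement's English description precedes it below -/
import Mathlib

section
/- Let M be a connected Riemannian manifold (viewed as a metric space with the induced path metric) that is not complete. Then for every x in M and every ε > 0 there exists a 1-Lipschitz curve γ : [0,c) → M with γ(0) = x and c < diam(M) + 1 + ε which admits no continuous extension to [0,c]. -/
open Metric Set Filter

/-- A connected Riemannian manifold is abstracted as a connected length metric space
(every pair of points is joined, up to any `δ > 0`, by a 1-Lipschitz path of length
at most `dist x y + δ`). If it is bounded and not complete, then from every point `x`
and for every `ε > 0` there is a 1-Lipschitz curve `γ : [0,c) → M`, `γ 0 = x`,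
with `c < diam M + 1 + ε`, admitting no continuous extension to `[0,c]`. -/
theorem stmt0 {M : Type*} [MetricSpace M] [ConnectedSpace M]
    (hlen : ∀ x y : M, ∀ δ > 0, ∃ L : ℝ, ∃ γ : ℝ → M, 0 ≤ L ∧ L ≤ dist x y + δ ∧
      LipschitzOnWith 1 γ (Icc 0 L) ∧ γ 0 = x ∧ γ L = y)
    (hbdd : Bornology.IsBounded (univ : Set M))
    (hnc : ¬ CompleteSpace M) :
    ∀ x : M, ∀ ε > 0, ∃ c : ℝ, 0 < c ∧ c < Metric.diam (univ : Set M) + 1 + ε ∧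
      ∃ γ : ℝ → M, LipschitzOnWith 1 γ (Ico 0 c) ∧ γ 0 = x ∧
        ¬ ∃ γ' : ℝ → M, ContinuousOn γ' (Icc 0 c) ∧ EqOn γ' γ (Ico 0 c) := by
  intro x ε hε
  classical
  -- a Cauchy sequence with no limit
  obtain ⟨u, hu, hnlim⟩ : ∃ u : ℕ → M, CauchySeq u ∧ ¬ ∃ a, Tendsto u atTop (nhds a) := by
    by_contra h
    push_neg at h
    exact hnc (Metric.complete_of_cauchySeq_tendsto fun u hu => h u hu)
  set δ : ℕ → ℝ := fun n => (1/2 : ℝ) ^ n * 8⁻¹ with hδdef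
  have hδpos : ∀ n, 0 < δ n := fun n => by positivity
  obtain ⟨φ, hφmono, hφd⟩ := hu.subseq_mem
      (V := fun n => {p : M × M | dist p.1 p.2 < δ n})
      (fun n => Metric.dist_mem_uniformity (hδpos n))
  set w : ℕ → M := fun n => Nat.casesOn n x (fun k => u (φ k)) with hwdef
  have hw0 : w 0 = x := rfl
  have hdw : ∀ n, dist (w (n+1)) (w (n+2)) ≤ δ n := by
    intro n
    have h := hφd n
    simp only [mem_setOf_eq] at h
    calc dist (w (n+1)) (w (n+2)) = dist (u (φ (n+1))) (u (φ n)) := dist_comm _ _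
      _ ≤ δ n := h.le
  have hseg : ∀ n, ∃ L : ℝ, ∃ g : ℝ → M, 0 ≤ L ∧ L ≤ dist (w n) (w (n+1)) + δ n ∧
      LipschitzOnWith 1 g (Icc 0 L) ∧ g 0 = w n ∧ g L = w (n+1) :=
    fun n => hlen (w n) (w (n+1)) (δ n) (hδpos n)
  choose L g hL0 hLle hglip hg0 hgL using hseg
  set L' : ℕ → ℝ := fun n => L n + δ n with hL'def
  have hL'pos : ∀ n, 0 < L' n := fun n => by
    have h1 := hL0 n; have h2 := hδpos n
    simp only [hL'def]; linarith
  have hLleL' : ∀ n, L n ≤ L' n := fun n => by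
    have := hδpos n; simp only [hL'def]; linarith
  set g' : ℕ → ℝ → M := fun n t => g n (min t (L n)) with hg'def
  have hg'0 : ∀ n, g' n 0 = w n := fun n => by
    simp only [hg'def, min_eq_left (hL0 n)]; exact hg0 n
  have hg'end : ∀ n t, L n ≤ t → g' n t = w (n+1) := fun n t ht => by
    simp only [hg'def, min_eq_right ht]; exact hgL n
  have hg'dist : ∀ n, ∀ a ∈ Icc (0:ℝ) (L' n), ∀ b ∈ Icc (0:ℝ) (L' n),
      dist (g' n a) (g' n b) ≤ dist a b := by
    intro n a ha b hb
    have h1 : min a (L n) ∈ Icc (0:ℝ) (L n) := ⟨le_min ha.1 (hL0 n), min_le_right _ _⟩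
    have h2 : min b (L n) ∈ Icc (0:ℝ) (L n) := ⟨le_min hb.1 (hL0 n), min_le_right _ _⟩
    have hlip := (lipschitzOnWith_iff_dist_le_mul.mp (hglip n)) _ h1 _ h2
    have hm : dist (min a (L n)) (min b (L n)) ≤ dist a b := by
      rw [Real.dist_eq, Real.dist_eq]
      calc |min a (L n) - min b (L n)| ≤ max |a - b| |L n - L n| :=
            abs_min_sub_min_le_max _ _ _ _
        _ = |a - b| := by simp
    calc dist (g' n a) (g' n b) ≤ 1 * dist (min a (L n)) (min b (L n)) := by
          simpa using hlip
      _ ≤ dist a b := by simpa using hm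
  -- partial sums and total length
  set s : ℕ → ℝ := fun n => ∑ i ∈ Finset.range n, L' i with hsdef
  have hs0 : s 0 = 0 := by simp [hsdef]
  have hssucc : ∀ n, s (n+1) = s n + L' n := fun n => Finset.sum_range_succ _ n
  have hsmono : StrictMono s := strictMono_nat_of_lt_succ fun n => by
    rw [hssucc]; linarith [hL'pos n]
  have hsnonneg : ∀ n, 0 ≤ s n := fun n => hs0 ▸ hsmono.monotone (Nat.zero_le n)
  have hL'bound : ∀ n, L' (n+1) ≤ (1/2:ℝ)^n * 4⁻¹ := by
    intro n
    have h1 := hLle (n+1)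
    have h2 := hdw n
    have hδ1 : δ (n+1) = (1/2:ℝ)^n * (1/2) * 8⁻¹ := by
      show (1/2:ℝ)^(n+1) * 8⁻¹ = _; ring
    have hδ0 : δ n = (1/2:ℝ)^n * 8⁻¹ := rfl
    simp only [hL'def]
    rw [hδ0] at h2
    rw [hδ1] at h1 ⊢
    nlinarith [pow_nonneg (by norm_num : (0:ℝ) ≤ 1/2) n]
  have hsumtail : Summable (fun n => L' (n+1)) :=
    Summable.of_nonneg_of_le (fun n => (hL'pos _).le) hL'bound
      (summable_geometric_two.mul_right _)
  have hsumL' : Summable L' := (summable_nat_add_iff 1).mp hsumtail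
  set c : ℝ := ∑' n, L' n with hcdef
  have hsc : ∀ n, s n < c := by
    intro n
    have h := Summable.sum_add_tsum_nat_add n hsumL'
    have hsumn : Summable (fun i => L' (i + n)) := (summable_nat_add_iff n).mpr hsumL'
    have htail : L' n ≤ ∑' i, L' (i + n) := by
      have := Summable.le_tsum hsumn 0 (fun j _ => (hL'pos _).le)
      simpa using this
    have hsn : s n = ∑ i ∈ Finset.range n, L' i := rfl
    rw [hcdef, ← h, hsn]
    linarith [hL'pos n]
  have hcpos : 0 < c := hs0 ▸ hsc 0
  have hstend : Tendsto s atTop (nhds c) := hsumL'.hasSum.tendsto_sum_nat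
  have hdxw : dist x (w 1) ≤ Metric.diam (univ : Set M) :=
    dist_le_diam_of_mem hbdd (mem_univ _) (mem_univ _)
  have hclt : c < Metric.diam (univ : Set M) + 1 + ε := by
    have h := Summable.sum_add_tsum_nat_add 1 hsumL'
    have htail : (∑' i, L' (i+1)) ≤ ∑' i : ℕ, (1/2:ℝ)^i * 4⁻¹ := by
      refine Summable.tsum_le_tsum (fun i => hL'bound i) ?_ (summable_geometric_two.mul_right _)
      exact (summable_nat_add_iff 1).mpr hsumL'
    have hgeo : (∑' i : ℕ, (1/2:ℝ)^i * 4⁻¹) = 2 * 4⁻¹ := by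
      rw [tsum_mul_right, tsum_geometric_two]
    have hL'0 : L' 0 ≤ Metric.diam (univ : Set M) + 4⁻¹ := by
      have h1 := hLle 0
      rw [hw0] at h1
      have hδ0 : δ 0 = 8⁻¹ := by simp [hδdef]
      simp only [hL'def]
      rw [hδ0] at h1 ⊢
      linarith
    have hr1 : ∑ i ∈ Finset.range 1, L' i = L' 0 := by simp
    rw [hr1] at h
    have : c ≤ Metric.diam (univ : Set M) + 3/4 := by
      rw [hcdef, ← h]; rw [hgeo] at htail; linarith
    linarith
  -- the concatenated curves
  set Γ : ℕ → ℝ → M := fun n => Nat.rec (g' 0)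
    (fun k ih t => if t ≤ s (k+1) then ih t else g' (k+1) (t - s (k+1))) n with hΓdef
  have hΓz : ∀ t, Γ 0 t = g' 0 t := fun t => rfl
  have hΓsucc : ∀ k t, Γ (k+1) t = if t ≤ s (k+1) then Γ k t else g' (k+1) (t - s (k+1)) :=
    fun k t => rfl
  have hΓx : ∀ n, Γ n 0 = x := by
    intro n
    induction n with
    | zero => rw [hΓz, hg'0 0, hw0]
    | succ k ih => rw [hΓsucc, if_pos (hsnonneg (k+1))]; exact ih
  have hΓend : ∀ n, Γ n (s (n+1)) = w (n+1) := by
    intro n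
    cases n with
    | zero =>
        rw [hΓz]
        apply hg'end
        have : s 1 = L' 0 := by rw [hssucc, hs0]; ring
        rw [this]; exact hLleL' 0
    | succ k =>
        rw [hΓsucc, if_neg (not_le.mpr (hsmono (Nat.lt_succ_self (k+1))))]
        apply hg'end
        have : s (k+2) - s (k+1) = L' (k+1) := by rw [hssucc (k+1)]; ring
        rw [this]; exact hLleL' (k+1)
  have hΓdist : ∀ n, ∀ a ∈ Icc (0:ℝ) (s (n+1)), ∀ b ∈ Icc (0:ℝ) (s (n+1)),
      dist (Γ n a) (Γ n b) ≤ dist a b := by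
    intro n
    induction n with
    | zero =>
        intro a ha b hb
        have h1 : s 1 = L' 0 := by rw [hssucc, hs0]; ring
        rw [hΓz, hΓz]
        exact hg'dist 0 a (h1 ▸ ha) b (h1 ▸ hb)
    | succ k ih =>
        have key : ∀ a ∈ Icc (0:ℝ) (s (k+2)), ∀ b ∈ Icc (0:ℝ) (s (k+2)), a ≤ b →
            dist (Γ (k+1) a) (Γ (k+1) b) ≤ dist a b := by
          intro a ha b hb hab
          have hdiff : s (k+2) - s (k+1) = L' (k+1) := by rw [hssucc (k+1)]; ring
          by_cases hbk : b ≤ s (k+1)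
          · have hak : a ≤ s (k+1) := hab.trans hbk
            rw [hΓsucc, if_pos hak, hΓsucc, if_pos hbk]
            exact ih a ⟨ha.1, hak⟩ b ⟨hb.1, hbk⟩
          · push_neg at hbk
            by_cases hak : a ≤ s (k+1)
            · rw [hΓsucc, if_pos hak, hΓsucc, if_neg (not_le.mpr hbk)]
              have e1 : dist (Γ k a) (Γ k (s (k+1))) ≤ dist a (s (k+1)) :=
                ih a ⟨ha.1, hak⟩ (s (k+1)) ⟨hsnonneg _, le_refl _⟩
              have e2 : dist (g' (k+1) 0) (g' (k+1) (b - s (k+1))) ≤ dist 0 (b - s (k+1)) := by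
                apply hg'dist (k+1) 0 ⟨le_refl _, (hL'pos _).le⟩
                constructor
                · linarith
                · rw [← hdiff]; linarith [hb.2]
              calc dist (Γ k a) (g' (k+1) (b - s (k+1)))
                  ≤ dist (Γ k a) (Γ k (s (k+1))) + dist (Γ k (s (k+1))) (g' (k+1) (b - s (k+1))) :=
                    dist_triangle _ _ _
                _ = dist (Γ k a) (Γ k (s (k+1))) + dist (g' (k+1) 0) (g' (k+1) (b - s (k+1))) := by
                    rw [hΓend k, hg'0 (k+1)]
                _ ≤ dist a (s (k+1)) + dist 0 (b - s (k+1)) := add_le_add e1 e2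
                _ ≤ dist a b := by
                    rw [Real.dist_eq, Real.dist_eq, Real.dist_eq,
                      abs_of_nonpos (by linarith), abs_of_nonpos (by linarith),
                      abs_of_nonpos (by linarith)]
                    linarith
            · push_neg at hak
              rw [hΓsucc, if_neg (not_le.mpr hak), hΓsucc, if_neg (not_le.mpr hbk)]
              have := hg'dist (k+1) (a - s (k+1))
                ⟨by linarith, by rw [← hdiff]; linarith [ha.2]⟩ (b - s (k+1))
                ⟨by linarith, by rw [← hdiff]; linarith [hb.2]⟩
              calc dist (g' (k+1) (a - s (k+1))) (g' (k+1) (b - s (k+1)))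
                  ≤ dist (a - s (k+1)) (b - s (k+1)) := this
                _ = dist a b := by rw [Real.dist_eq, Real.dist_eq]; ring_nf
        intro a ha b hb
        rcases le_total a b with h | h
        · exact key a ha b hb h
        · rw [dist_comm, dist_comm a b]; exact key b hb a ha h
  have hΓcons : ∀ n m, n ≤ m → ∀ t, t ≤ s (n+1) → Γ m t = Γ n t := by
    intro n m hnm
    induction m, hnm using Nat.le_induction with
    | base => intro t _; rfl
    | succ m hnm ih =>
        intro t ht
        rw [hΓsucc, if_pos (ht.trans (hsmono.monotone (by omega)))]
        exact ih t ht
  have hex : ∀ t, t < c → ∃ n, t ≤ s (n+1) := by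
    intro t ht
    obtain ⟨n, hn⟩ := (hstend.eventually (eventually_gt_nhds ht)).exists
    exact ⟨n, hn.le.trans (hsmono.monotone (Nat.le_succ n))⟩
  set γ : ℝ → M := fun t => if h : ∃ n, t ≤ s (n+1) then Γ (Nat.find h) t else x with hγdef
  have hγeq : ∀ t, 0 ≤ t → ∀ n, t ≤ s (n+1) → γ t = Γ n t := by
    intro t ht n hn
    have hh : ∃ k, t ≤ s (k+1) := ⟨n, hn⟩
    simp only [hγdef, dif_pos hh]
    exact (hΓcons _ n (Nat.find_min' hh hn) t (Nat.find_spec hh)).symm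
  have hγ0 : γ 0 = x := by
    rw [hγeq 0 le_rfl 0 (hsnonneg 1)]; exact hΓx 0
  have hγlip : LipschitzOnWith 1 γ (Ico 0 c) := by
    rw [lipschitzOnWith_iff_dist_le_mul]
    intro a ha b hb
    obtain ⟨na, hna⟩ := hex a ha.2
    obtain ⟨nb, hnb⟩ := hex b hb.2
    have h1 : a ≤ s (max na nb + 1) := hna.trans (hsmono.monotone (by omega))
    have h2 : b ≤ s (max na nb + 1) := hnb.trans (hsmono.monotone (by omega))
    rw [hγeq a ha.1 _ h1, hγeq b hb.1 _ h2, NNReal.coe_one, one_mul]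
    exact hΓdist _ a ⟨ha.1, h1⟩ b ⟨hb.1, h2⟩
  refine ⟨c, hcpos, hclt, γ, hγlip, hγ0, ?_⟩
  rintro ⟨γ', hγ'cont, hγ'eq⟩
  apply hnlim
  refine ⟨γ' c, tendsto_nhds_of_cauchySeq_of_subseq hu hφmono.tendsto_atTop ?_⟩
  have key : ∀ n, (u ∘ φ) n = γ' (s (n+1)) := by
    intro n
    have hmem : s (n+1) ∈ Ico (0:ℝ) c := ⟨hsnonneg _, hsc _⟩
    rw [Function.comp_apply, hγ'eq hmem, hγeq _ (hsnonneg _) n le_rfl, hΓend n]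
  have hsc' : Tendsto (fun n => s (n+1)) atTop (nhds c) :=
    hstend.comp (tendsto_add_atTop_nat 1)
  have hcw : ContinuousWithinAt γ' (Icc 0 c) c := hγ'cont c ⟨hcpos.le, le_rfl⟩
  have htend : Tendsto (fun n => γ' (s (n+1))) atTop (nhds (γ' c)) := by
    apply hcw.tendsto.comp
    apply tendsto_nhdsWithin_of_tendsto_nhds_of_eventually_within _ hsc'
    exact Eventually.of_forall fun n => ⟨hsnonneg _, (hsc _).le⟩
  exact htend.congr fun n => (key n).symm
end

section
/- Let M be a connected Riemannian manifold and let π : M̄ → M be a covering map, with M̄ given the pulled-back Riemannian metric. If γ : [0,c) → M is a 1-Lipschitz curve with no continuous extension to [0,c], then any lift γ̄ : [0,c) → M̄ of γ is 1-Lipschitz (for the induced distance on M̄) and has no continuous extension to [0,c]. -/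
open Set Filter Topology NNReal

/-!
Since `π` is a local isometry and the lift is continuous, every `x ∈ [0, c)` has a neighbourhood
in `[0, c)` on which `d(γ̄ x, γ̄ z) = d(γ x, γ z) ≤ |z - x|`. On an interval of `ℝ`, a continuous
induction upgrades such a bound, local around each base point, to a global Lipschitz bound.
Non-extendability is inherited because `π` is continuous, so a continuous extension of `γ̄` would
project to one of `γ`.
-/

def IsLocallyDistPreserving {X Y : Type*} [PseudoMetricSpace X] [PseudoMetricSpace Y]
    (π : X → Y) : Prop :=
  ∀ x : X, ∃ ε > 0, ∀ a ∈ Metric.ball x ε, ∀ b ∈ Metric.ball x ε, dist a b = dist (π a) (π b)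

theorem IsLocallyDistPreserving.eventually_dist_comp_eq {α X Y : Type*} [TopologicalSpace α]
    [PseudoMetricSpace X] [PseudoMetricSpace Y] {π : X → Y} (hπ : IsLocallyDistPreserving π)
    {f : α → X} {s : Set α} {x : α} (hf : ContinuousWithinAt f s x) :
    ∀ᶠ z in 𝓝[s] x, dist (f x) (f z) = dist (π (f x)) (π (f z)) := by
  obtain ⟨ε, hε, hiso⟩ := hπ (f x)
  filter_upwards [hf (Metric.ball_mem_nhds _ hε)] with z hz
  exact hiso _ (Metric.mem_ball_self hε) _ hz

section Interval

variable {X : Type*} [PseudoMetricSpace X] {f : ℝ → X}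

theorem dist_le_mul_sub_of_forall_eventually {K a b : ℝ} (hab : a ≤ b)
    (hf : ContinuousOn f (Icc a b))
    (hloc : ∀ x ∈ Ico a b, ∀ᶠ z in 𝓝[>] x, dist (f x) (f z) ≤ K * (z - x)) :
    dist (f a) (f b) ≤ K * (b - a) := by
  let S := {u | dist (f a) (f u) ≤ K * (u - a)}
  have hclosed : IsClosed (S ∩ Icc a b) := by
    rw [inter_comm]
    exact isClosed_Icc.isClosed_le
      (continuous_dist.comp_continuousOn (continuousOn_const.prodMk hf)) (by fun_prop)
  have hS : Icc a b ⊆ S := by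
    refine hclosed.Icc_subset_of_forall_mem_nhdsWithin (by simp [S]) fun x ⟨hxS, hx⟩ ↦ ?_
    filter_upwards [hloc x hx] with z hz
    calc dist (f a) (f z) ≤ dist (f a) (f x) + dist (f x) (f z) := dist_triangle _ _ _
      _ ≤ K * (x - a) + K * (z - x) := add_le_add hxS hz
      _ = K * (z - a) := by ring
  exact hS (right_mem_Icc.2 hab)

theorem lipschitzOnWith_of_forall_eventually {K : ℝ≥0} {s : Set ℝ} (hs : s.OrdConnected)
    (hloc : ∀ x ∈ s, ∀ᶠ z in 𝓝[s] x, dist (f x) (f z) ≤ K * dist x z) :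
    LipschitzOnWith K f s := by
  have hcont : ContinuousOn f s := fun x hx ↦ by
    refine tendsto_iff_dist_tendsto_zero.2 (squeeze_zero' (.of_forall fun _ ↦ dist_nonneg)
      ((hloc x hx).mono fun z hz ↦ by simpa only [dist_comm] using hz) ?_)
    have : Tendsto (fun z ↦ (K : ℝ) * dist x z) (𝓝 x) (𝓝 (K * dist x x)) :=
      (continuous_const.mul (continuous_const.dist continuous_id)).tendsto x
    simpa using this.mono_left nhdsWithin_le_nhds
  have hle : ∀ x ∈ s, ∀ y ∈ s, x ≤ y → dist (f x) (f y) ≤ K * dist x y := by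
    intro x hx y hy hxy
    have hIcc : Icc x y ⊆ s := hs.out hx hy
    rw [Real.dist_eq, abs_sub_comm, abs_of_nonneg (sub_nonneg.2 hxy)]
    refine dist_le_mul_sub_of_forall_eventually hxy (hcont.mono hIcc) fun z hz ↦ ?_
    have hzs : z ∈ s := hIcc (Ico_subset_Icc_self hz)
    have hs_nhdsGT : s ∈ 𝓝[>] z :=
      mem_of_superset (Ioo_mem_nhdsGT hz.2) fun u hu ↦ hs.out hzs hy (Ioo_subset_Icc_self hu)
    filter_upwards [nhdsWithin_le_of_mem hs_nhdsGT (hloc z hzs), self_mem_nhdsWithin]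
      with u hu (hzu : z < u)
    rwa [Real.dist_eq, abs_sub_comm, abs_of_pos (sub_pos.2 hzu)] at hu
  refine LipschitzOnWith.of_dist_le_mul fun x hx y hy ↦ ?_
  rcases le_total x y with hxy | hyx
  · exact hle x hx y hy hxy
  · rw [dist_comm, dist_comm x]
    exact hle y hy x hx hyx

end Interval

theorem stmt8_general {M' M : Type*} [MetricSpace M'] [MetricSpace M] {π : M' → M}
    (hcov : IsCoveringMap π)
    (hloc : ∀ x : M', ∃ ε > 0, ∀ a ∈ Metric.ball x ε, ∀ b ∈ Metric.ball x ε,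
      dist a b = dist (π a) (π b))
    {c : ℝ} {γ : ℝ → M}
    (hγ : LipschitzOnWith 1 γ (Ico 0 c))
    (hnoext : ¬ ∃ γ' : ℝ → M, ContinuousOn γ' (Icc 0 c) ∧ EqOn γ' γ (Ico 0 c))
    {γbar : ℝ → M'} (hcont : ContinuousOn γbar (Ico 0 c))
    (hlift : ∀ t ∈ Ico 0 c, π (γbar t) = γ t) :
    LipschitzOnWith 1 γbar (Ico 0 c) ∧
      ¬ ∃ γ' : ℝ → M', ContinuousOn γ' (Icc 0 c) ∧ EqOn γ' γbar (Ico 0 c) := by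
  have hπ : IsLocallyDistPreserving π := hloc
  refine ⟨lipschitzOnWith_of_forall_eventually ordConnected_Ico fun x hx ↦ ?_, ?_⟩
  · filter_upwards [hπ.eventually_dist_comp_eq (hcont x hx), self_mem_nhdsWithin] with z hz hzs
    rw [hz, hlift x hx, hlift z hzs]
    exact hγ.dist_le_mul x hx z hzs
  · rintro ⟨γ', hγ'c, hγ'γbar⟩
    refine hnoext ⟨π ∘ γ', hcov.continuous.comp_continuousOn hγ'c, fun t ht ↦ ?_⟩
    simp only [Function.comp_apply, hγ'γbar ht, hlift t ht]

/-- Lifts of non-extendable 1-Lipschitz curves along a covering map which is a local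
isometry (and the covering space carries the induced path metric) are 1-Lipschitz and
non-extendable. -/
theorem stmt8 {M' M : Type*} [MetricSpace M'] [MetricSpace M] {π : M' → M}
    (hcov : IsCoveringMap π)
    (hloc : ∀ x : M', ∃ ε > 0, ∀ a ∈ Metric.ball x ε, ∀ b ∈ Metric.ball x ε,
      dist a b = dist (π a) (π b))
    {c : ℝ} (hc : 0 < c) {γ : ℝ → M}
    (hγ : LipschitzOnWith 1 γ (Ico 0 c))
    (hnoext : ¬ ∃ γ' : ℝ → M, ContinuousOn γ' (Icc 0 c) ∧ EqOn γ' γ (Ico 0 c))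
    {γbar : ℝ → M'} (hcont : ContinuousOn γbar (Ico 0 c))
    (hlift : ∀ t ∈ Ico 0 c, π (γbar t) = γ t) :
    LipschitzOnWith 1 γbar (Ico 0 c) ∧
      ¬ ∃ γ' : ℝ → M', ContinuousOn γ' (Icc 0 c) ∧ EqOn γ' γbar (Ico 0 c) :=
  stmt8_general hcov hloc hγ hnoext hcont hlift
end
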